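/- arXiv:0911.0867 — 2 statements merged into one kernel-verified Lean document; each statement's English description precedes it below -/
import Mathlib

section
/- For every integer n ≥ 1, the map Φ sending a matrix M ∈ G_ℂ to Φ(M) = (1/√(M₁₁)) · M (where M₁₁ > 0 is the (1,1)-entry of M) is an injective group homomorphism from G_ℂ into the Lorentz group O(2n+1,1) = {Q ∈ GL(2n+2,ℝ) : Q 𝕀 Qᵀ = 𝕀}, whose image is the set of matrices with first row (√u, x, −|x|²/(2√u)), middle block rows (0, B, −B xᵀ/√u), and last row (0, 0, 1/√u) with u > 0, x ∈ ℝ^{2n}, and B ∈ O(2n) commuting with J₀. -/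
open Matrix

/-- `ℝ^{2n} ≅ ℂⁿ` realized as `Fin n ⊕ Fin n` (real and imaginary parts). -/
abbrev TwoN (n : ℕ) := Fin n ⊕ Fin n

/-- Index set for `(2n+2) × (2n+2)` matrices: first row, `2n` middle rows, last row. -/
abbrev CIdx (n : ℕ) := Unit ⊕ TwoN n ⊕ Unit

/-- The standard complex structure `J₀` on `ℝ^{2n}`: the block matrix `[[0, -Iₙ], [Iₙ, 0]]`. -/
noncomputable def J0 (n : ℕ) : Matrix (TwoN n) (TwoN n) ℝ :=
  Matrix.fromBlocks 0 (-1) 1 0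

/-- The Lorentz form matrix `𝕀` with `1`'s at positions `(1, 2n+2)`, `(2n+2, 1)` and on the
middle diagonal, and `0` elsewhere. -/
noncomputable def iotaMat (n : ℕ) : Matrix (CIdx n) (CIdx n) ℝ :=
  Matrix.of fun i j =>
    match i, j with
    | Sum.inl _, Sum.inr (Sum.inr _) => 1
    | Sum.inr (Sum.inr _), Sum.inl _ => 1
    | Sum.inr (Sum.inl i), Sum.inr (Sum.inl j) => if i = j then 1 else 0
    | _, _ => 0

/-- The Lorentz group `O(2n+1, 1)` realized as `{Q : Q 𝕀 Qᵀ = 𝕀}`. -/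
noncomputable def LorentzSet (n : ℕ) : Set (Matrix (CIdx n) (CIdx n) ℝ) :=
  {Q | Q * iotaMat n * Qᵀ = iotaMat n}

/-- The matrix `Q(u, x, B)` with first row `(√u, x, -|x|²/(2√u))`, middle block rows
`(0, B, -B xᵀ/√u)` and last row `(0, 0, 1/√u)`. -/
noncomputable def simSqrtMat (n : ℕ) (u : ℝ) (x : TwoN n → ℝ)
    (B : Matrix (TwoN n) (TwoN n) ℝ) : Matrix (CIdx n) (CIdx n) ℝ :=
  Matrix.of fun i j =>
    match i, j with
    | Sum.inl _, Sum.inl _ => Real.sqrt u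
    | Sum.inl _, Sum.inr (Sum.inl j) => x j
    | Sum.inl _, Sum.inr (Sum.inr _) => -(∑ j, x j ^ 2) / (2 * Real.sqrt u)
    | Sum.inr (Sum.inl _), Sum.inl _ => 0
    | Sum.inr (Sum.inl i), Sum.inr (Sum.inl j) => B i j
    | Sum.inr (Sum.inl i), Sum.inr (Sum.inr _) => -(B.mulVec x i) / Real.sqrt u
    | Sum.inr (Sum.inr _), Sum.inl _ => 0
    | Sum.inr (Sum.inr _), Sum.inr (Sum.inl _) => 0
    | Sum.inr (Sum.inr _), Sum.inr (Sum.inr _) => 1 / Real.sqrt u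

/-- The matrix `M(u, x, B)` with first row `(u, √u·x, -|x|²/2)`, middle block rows
`(0, √u·B, -B xᵀ)` and last row `(0, 0, 1)`. -/
noncomputable def gcMat (n : ℕ) (u : ℝ) (x : TwoN n → ℝ) (B : Matrix (TwoN n) (TwoN n) ℝ) :
    Matrix (CIdx n) (CIdx n) ℝ :=
  Matrix.of fun i j =>
    match i, j with
    | Sum.inl _, Sum.inl _ => u
    | Sum.inl _, Sum.inr (Sum.inl j) => Real.sqrt u * x j
    | Sum.inl _, Sum.inr (Sum.inr _) => -(∑ j, x j ^ 2) / 2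
    | Sum.inr (Sum.inl _), Sum.inl _ => 0
    | Sum.inr (Sum.inl i), Sum.inr (Sum.inl j) => Real.sqrt u * B i j
    | Sum.inr (Sum.inl i), Sum.inr (Sum.inr _) => -(B.mulVec x i)
    | Sum.inr (Sum.inr _), Sum.inl _ => 0
    | Sum.inr (Sum.inr _), Sum.inr (Sum.inl _) => 0
    | Sum.inr (Sum.inr _), Sum.inr (Sum.inr _) => 1

/-- `G_ℂ`: the set of all matrices `M(u, x, B)` with `u > 0`, `x ∈ ℝ^{2n}`, and `B ∈ O(2n)`
commuting with `J₀`. -/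
noncomputable def GCSet (n : ℕ) : Set (Matrix (CIdx n) (CIdx n) ℝ) :=
  {M | ∃ (u : ℝ) (x : TwoN n → ℝ) (B : Matrix (TwoN n) (TwoN n) ℝ),
    0 < u ∧ B ∈ Matrix.orthogonalGroup (TwoN n) ℝ ∧ B * J0 n = J0 n * B ∧
    M = gcMat n u x B}

/-- The map `Φ(M) = (1/√(M₁₁)) • M`. -/
noncomputable def PhiMap (n : ℕ) (M : Matrix (CIdx n) (CIdx n) ℝ) :
    Matrix (CIdx n) (CIdx n) ℝ :=
  (1 / Real.sqrt (M (Sum.inl ()) (Sum.inl ()))) • M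

/-! Every `M ∈ G_ℂ` has `M₁₁ = u > 0`, and `Φ(M)₁₁ = M₁₁ / √M₁₁ = √M₁₁`, so `M = Φ(M)₁₁ • Φ(M)` is
recovered from `Φ(M)`. Multiplicativity is `(MN)₁₁ = M₁₁ N₁₁` for these block upper-triangular
matrices together with `√(ab) = √a √b`. Finally `Φ(M(u, x, B)) = Q(u, x, B)`, and `Q 𝕀 Qᵀ = 𝕀`
reduces entrywise to `B Bᵀ = 1` and cancellations of `√u`. -/

section

variable {n : ℕ}

lemma PhiMap_apply_inl_inl (M : Matrix (CIdx n) (CIdx n) ℝ) :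
    PhiMap n M (Sum.inl ()) (Sum.inl ()) = Real.sqrt (M (Sum.inl ()) (Sum.inl ())) := by
  rw [PhiMap, Matrix.smul_apply, smul_eq_mul, one_div_mul_eq_div, Real.div_sqrt]

lemma sqrt_smul_PhiMap {M : Matrix (CIdx n) (CIdx n) ℝ} (hM : 0 < M (Sum.inl ()) (Sum.inl ())) :
    Real.sqrt (M (Sum.inl ()) (Sum.inl ())) • PhiMap n M = M := by
  rw [PhiMap, smul_smul, mul_one_div_cancel (Real.sqrt_pos.2 hM).ne', one_smul]

lemma PhiMap_injOn : Set.InjOn (PhiMap n) {M | 0 < M (Sum.inl ()) (Sum.inl ())} := by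
  intro M hM N hN h
  have h₁₁ := PhiMap_apply_inl_inl M
  rw [h, PhiMap_apply_inl_inl N] at h₁₁
  rw [← sqrt_smul_PhiMap hM, ← sqrt_smul_PhiMap hN, h, h₁₁]

lemma PhiMap_mul {M N : Matrix (CIdx n) (CIdx n) ℝ} (hM : 0 ≤ M (Sum.inl ()) (Sum.inl ()))
    (hMN : (M * N) (Sum.inl ()) (Sum.inl ()) =
      M (Sum.inl ()) (Sum.inl ()) * N (Sum.inl ()) (Sum.inl ())) :
    PhiMap n (M * N) = PhiMap n M * PhiMap n N := by
  rw [PhiMap, PhiMap, PhiMap, hMN, Real.sqrt_mul hM, smul_mul_smul_comm, one_div_mul_one_div]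

lemma gcMat_mul_gcMat_apply_inl_inl (u v : ℝ) (x y : TwoN n → ℝ)
    (B C : Matrix (TwoN n) (TwoN n) ℝ) :
    (gcMat n u x B * gcMat n v y C) (Sum.inl ()) (Sum.inl ()) = u * v := by
  simp [Matrix.mul_apply, gcMat]

lemma PhiMap_gcMat {u : ℝ} (hu : 0 < u) (x : TwoN n → ℝ) (B : Matrix (TwoN n) (TwoN n) ℝ) :
    PhiMap n (gcMat n u x B) = simSqrtMat n u x B := by
  have hs : Real.sqrt u ≠ 0 := (Real.sqrt_pos.2 hu).ne'
  ext i j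
  rcases i with ⟨⟩ | i | ⟨⟩ <;> rcases j with ⟨⟩ | j | ⟨⟩ <;>
    simp only [PhiMap, gcMat, simSqrtMat, Matrix.smul_apply, Matrix.of_apply, smul_eq_mul,
      mul_zero] <;>
    field_simp
  rw [Real.sq_sqrt hu.le]

lemma mul_iotaMat_mul_transpose_apply (Q : Matrix (CIdx n) (CIdx n) ℝ) (i j : CIdx n) :
    (Q * iotaMat n * Qᵀ) i j =
      Q i (Sum.inl ()) * Q j (Sum.inr (Sum.inr ())) +
        Q i (Sum.inr (Sum.inr ())) * Q j (Sum.inl ()) +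
        ∑ m, Q i (Sum.inr (Sum.inl m)) * Q j (Sum.inr (Sum.inl m)) := by
  simp only [iotaMat, Matrix.mul_apply, of_apply, Fintype.sum_sum_type, Finset.univ_unique,
    PUnit.default_eq_unit, Finset.sum_singleton, transpose_apply, mul_zero, Finset.sum_const_zero,
    add_zero, mul_one, zero_add, mul_ite, Sum.inl.injEq, Finset.sum_ite_eq', Finset.mem_univ,
    ↓reduceIte, reduceCtorEq, Sum.inr.injEq]
  ring

lemma simSqrtMat_mem_LorentzSet {u : ℝ} (hu : 0 < u) (x : TwoN n → ℝ)
    {B : Matrix (TwoN n) (TwoN n) ℝ} (hB : B * Bᵀ = 1) :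
    simSqrtMat n u x B ∈ LorentzSet n := by
  have hs : Real.sqrt u ≠ 0 := (Real.sqrt_pos.2 hu).ne'
  ext i j
  rw [mul_iotaMat_mul_transpose_apply]
  rcases i with ⟨⟩ | i | ⟨⟩ <;> rcases j with ⟨⟩ | j | ⟨⟩ <;>
    simp only [simSqrtMat, iotaMat, Matrix.of_apply, mul_zero, zero_mul, add_zero, zero_add,
      Finset.sum_const_zero]
  case inl.inl =>
    field_simp
    simp only [sq]
    ring
  case inl.inr.inl =>
    simp only [Matrix.mulVec, dotProduct, mul_comm (x _)]
    field_simp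
    ring
  case inr.inl.inl =>
    simp only [Matrix.mulVec, dotProduct]
    field_simp
    ring
  case inr.inl.inr.inl =>
    simpa [Matrix.mul_apply, Matrix.one_apply] using congrFun (congrFun hB i) j
  all_goals field_simp

end

theorem PhiMap_injective_hom_into_lorentz_general (n : ℕ) :
    Set.InjOn (PhiMap n) (GCSet n) ∧
    (∀ M ∈ GCSet n, ∀ N ∈ GCSet n, PhiMap n (M * N) = PhiMap n M * PhiMap n N) ∧
    (∀ M ∈ GCSet n, PhiMap n M ∈ LorentzSet n) ∧
    PhiMap n '' GCSet n =
      {Q | ∃ (u : ℝ) (x : TwoN n → ℝ) (B : Matrix (TwoN n) (TwoN n) ℝ),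
        0 < u ∧ B ∈ Matrix.orthogonalGroup (TwoN n) ℝ ∧ B * J0 n = J0 n * B ∧
        Q = simSqrtMat n u x B} := by
  refine ⟨PhiMap_injOn.mono ?_, ?_, ?_, ?_⟩
  · rintro _ ⟨u, x, B, hu, -, -, rfl⟩
    exact hu
  · rintro _ ⟨u, x, B, hu, -, -, rfl⟩ _ ⟨v, y, C, -, -, -, rfl⟩
    exact PhiMap_mul hu.le (gcMat_mul_gcMat_apply_inl_inl u v x y B C)
  · rintro _ ⟨u, x, B, hu, hB, -, rfl⟩
    rw [PhiMap_gcMat hu]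
    exact simSqrtMat_mem_LorentzSet hu x ((Matrix.mem_orthogonalGroup_iff _ _).1 hB)
  · ext Q
    constructor
    · rintro ⟨_, ⟨u, x, B, hu, hB, hJ, rfl⟩, rfl⟩
      exact ⟨u, x, B, hu, hB, hJ, PhiMap_gcMat hu x B⟩
    · rintro ⟨u, x, B, hu, hB, hJ, rfl⟩
      exact ⟨gcMat n u x B, ⟨u, x, B, hu, hB, hJ, rfl⟩, PhiMap_gcMat hu x B⟩

/-- `Φ : M ↦ (1/√(M₁₁)) • M` is an injective group homomorphism from `G_ℂ` into the Lorentz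
group `O(2n+1,1) = {Q : Q 𝕀 Qᵀ = 𝕀}`, whose image is exactly the set of matrices
`Q(u, x, B)` with `u > 0`, `x ∈ ℝ^{2n}`, and `B ∈ O(2n)` commuting with `J₀`. -/
theorem PhiMap_injective_hom_into_lorentz (n : ℕ) (hn : 1 ≤ n) :
    Set.InjOn (PhiMap n) (GCSet n) ∧
    (∀ M ∈ GCSet n, ∀ N ∈ GCSet n, PhiMap n (M * N) = PhiMap n M * PhiMap n N) ∧
    (∀ M ∈ GCSet n, PhiMap n M ∈ LorentzSet n) ∧
    PhiMap n '' GCSet n =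
      {Q | ∃ (u : ℝ) (x : TwoN n → ℝ) (B : Matrix (TwoN n) (TwoN n) ℝ),
        0 < u ∧ B ∈ Matrix.orthogonalGroup (TwoN n) ℝ ∧ B * J0 n = J0 n * B ∧
        Q = simSqrtMat n u x B} :=
  PhiMap_injective_hom_into_lorentz_general n
end

section
/- Let n ≥ 1, 1 ≤ k ≤ n+1, and a₁, …, a_k ∈ ℝ. Suppose there exist indices i, j ≤ k with (a_i+1)² > 1 and (a_j+1)² < 1. Then there exist vectors v, v' ∈ ℂ^{n+2} \ {0} with ⟨v,v⟩ = 0 and ⟨v',v'⟩ = 0 such that, setting ξ_w = (i(a₁+1)w₁, …, i(a_k+1)w_k, i w_{k+1}, …, i w_{n+2}) for w = (w₁,…,w_{n+2}), one has ⟨ξ_v, ξ_v⟩ > 0 and ⟨ξ_{v'}, ξ_{v'}⟩ < 0; i.e., the induced vector field is neither everywhere causal nor everywhere spacelike on the null cone. -/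
open Complex

/-- The Hermitian form `⟨z,w⟩ = conj(z₁)w₁ + ⋯ + conj(z_{n+1})w_{n+1} − conj(z_{n+2})w_{n+2}`
of signature `(n+1, 1)` on `ℂ^{n+2}`. -/
noncomputable def hermForm (n : ℕ) (z w : Fin (n + 2) → ℂ) : ℂ :=
  ∑ j : Fin (n + 2), (if (j : ℕ) = n + 1 then (-1 : ℂ) else 1) * ((starRingEnd ℂ) (z j) * w j)

/-- The velocity vector `ξ_w = (i(a₁+1)w₁, …, i(a_k+1)w_k, i w_{k+1}, …, i w_{n+2})`
of the one-parameter group `ρ(t) = diag(e^{it(a₁+1)}, …, e^{it(a_k+1)}, e^{it}, …, e^{it})`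
at `w`. -/
noncomputable def xiShift (n k : ℕ) (a : Fin k → ℝ) (w : Fin (n + 2) → ℂ) :
    Fin (n + 2) → ℂ :=
  fun j => if h : (j : ℕ) < k then Complex.I * ((a ⟨j, h⟩ : ℂ) + 1) * w j
           else Complex.I * w j

lemma hermForm_single_add_single_last (n : ℕ) (p : Fin (n + 2)) (hp : p ≠ Fin.last (n + 1))
    (c d : ℂ) :
    hermForm n (Pi.single p c + Pi.single (Fin.last (n + 1)) d)
      (Pi.single p c + Pi.single (Fin.last (n + 1)) d) = ((normSq c - normSq d : ℝ) : ℂ) := by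
  rw [hermForm, Fintype.sum_eq_add p (Fin.last (n + 1)) hp]
  · have hp' : (p : ℕ) ≠ n + 1 := fun h => hp (Fin.ext h)
    simp [hp, hp.symm, hp', normSq_eq_conj_mul_self]
    ring
  · rintro j ⟨hjp, hjl⟩
    simp [hjp, hjl]

lemma xiShift_single_add_single_last (n k : ℕ) (hk : k ≤ n + 1) (a : Fin k → ℝ)
    (i : Fin k) (c d : ℂ) :
    xiShift n k a
        (Pi.single (Fin.castLE (Nat.le_succ_of_le hk) i) c + Pi.single (Fin.last (n + 1)) d) =
      Pi.single (Fin.castLE (Nat.le_succ_of_le hk) i) (I * (a i + 1) * c) +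
        Pi.single (Fin.last (n + 1)) (I * d) := by
  funext j
  by_cases hj : (j : ℕ) < k
  · have hjl : j ≠ Fin.last (n + 1) := by rintro rfl; simp at hj; omega
    by_cases hji : (j : ℕ) = i
    · obtain rfl : j = Fin.castLE (Nat.le_succ_of_le hk) i := Fin.ext hji
      simp [xiShift, hjl]
    · have : j ≠ Fin.castLE (Nat.le_succ_of_le hk) i := fun h => hji (by simp [h])
      simp [xiShift, hj, hjl, this]
  · have : j ≠ Fin.castLE (Nat.le_succ_of_le hk) i := by rintro rfl; simp at hj
    simp [xiShift, hj, this, Pi.single_apply]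

lemma exists_null_hermForm_xiShift_eq (n k : ℕ) (hk : k ≤ n + 1) (a : Fin k → ℝ) (i : Fin k) :
    ∃ v : Fin (n + 2) → ℂ, v ≠ 0 ∧ hermForm n v v = 0 ∧
      hermForm n (xiShift n k a v) (xiShift n k a v) = (((a i + 1) ^ 2 - 1 : ℝ) : ℂ) := by
  set p : Fin (n + 2) := Fin.castLE (Nat.le_succ_of_le hk) i
  have hp : p ≠ Fin.last (n + 1) := Fin.ne_of_lt (by simp [p, Fin.lt_def]; omega)
  refine ⟨Pi.single p 1 + Pi.single (Fin.last (n + 1)) 1, fun h => ?_, ?_, ?_⟩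
  · simpa [hp] using congrFun h p
  · simp [hermForm_single_add_single_last n p hp]
  · rw [xiShift_single_add_single_last n k hk, hermForm_single_add_single_last n p hp]
    simp only [normSq_mul, normSq_I, mul_one, one_mul]
    rw [← ofReal_one, ← ofReal_add, normSq_ofReal, sq]

theorem xiShift_mixed_general (n k : ℕ) (hk : k ≤ n + 1)
    (a : Fin k → ℝ)
    (hmix : ∃ i j : Fin k, 1 < (a i + 1) ^ 2 ∧ (a j + 1) ^ 2 < 1) :
    ∃ v v' : Fin (n + 2) → ℂ, v ≠ 0 ∧ v' ≠ 0 ∧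
      hermForm n v v = 0 ∧ hermForm n v' v' = 0 ∧
      0 < (hermForm n (xiShift n k a v) (xiShift n k a v)).re ∧
      (hermForm n (xiShift n k a v) (xiShift n k a v)).im = 0 ∧
      (hermForm n (xiShift n k a v') (xiShift n k a v')).re < 0 ∧
      (hermForm n (xiShift n k a v') (xiShift n k a v')).im = 0 := by
  obtain ⟨i, j, hi, hj⟩ := hmix
  obtain ⟨v, hv, hv_null, hξv⟩ := exists_null_hermForm_xiShift_eq n k hk a i
  obtain ⟨v', hv', hv'_null, hξv'⟩ := exists_null_hermForm_xiShift_eq n k hk a j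
  refine ⟨v, v', hv, hv', hv_null, hv'_null, ?_, ?_, ?_, ?_⟩ <;>
    simp only [hξv, hξv', ofReal_re, ofReal_im] <;> linarith

/-- If there are indices `i, j ≤ k` with `(a_i+1)² > 1` and `(a_j+1)² < 1`, then there are
nonzero null vectors `v, v'` with `⟨ξ_v, ξ_v⟩ > 0` and `⟨ξ_{v'}, ξ_{v'}⟩ < 0`: the induced
vector field is neither everywhere causal nor everywhere spacelike on the null cone. -/
theorem xiShift_mixed (n k : ℕ) (hn : 1 ≤ n) (hk1 : 1 ≤ k) (hk : k ≤ n + 1)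
    (a : Fin k → ℝ)
    (hmix : ∃ i j : Fin k, 1 < (a i + 1) ^ 2 ∧ (a j + 1) ^ 2 < 1) :
    ∃ v v' : Fin (n + 2) → ℂ, v ≠ 0 ∧ v' ≠ 0 ∧
      hermForm n v v = 0 ∧ hermForm n v' v' = 0 ∧
      0 < (hermForm n (xiShift n k a v) (xiShift n k a v)).re ∧
      (hermForm n (xiShift n k a v) (xiShift n k a v)).im = 0 ∧
      (hermForm n (xiShift n k a v') (xiShift n k a v')).re < 0 ∧
      (hermForm n (xiShift n k a v') (xiShift n k a v')).im = 0 :=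
  xiShift_mixed_general n k hk a hmix
end
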